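/- arXiv:2412.16564 — 2 statements merged into one kernel-verified Lean document; each statement's English description precedes it below -/
import Mathlib

section
/- Let i ≥ 1, τ > 0, t ∈ ℝ, and let ξ : ℝ → ℝ be (i+1)-times continuously differentiable on the interval [t − iτ, t]. Then there exist points r_1, …, r_i with r_j ∈ (t − jτ, t) for each j ∈ {1, …, i} such that ∇^i_τ ξ(t) − ξ^{(i)}(t) = (τ / (i+1)!) · Σ_{j=1}^{i} (−1)^j · (i choose j) · (−j)^{i+1} · ξ^{(i+1)}(r_j). -/
/-!
Expand every sample `ξ (t - j τ)` by Taylor's formula of degree `i` at `t`. The Taylor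
polynomials contribute `∑ₖ ξ⁽ᵏ⁾(t) (-τ)ᵏ / k! · ∑ⱼ (-1)ʲ (i choose j) jᵏ`, and the inner sums are,
up to the sign `(-1)ⁱ`, the `i`-th forward differences of `x ↦ xᵏ` at `0`: they vanish for
`k < i` and equal `(-1)ⁱ i!` for `k = i`. So the polynomial parts reproduce `τⁱ ξ⁽ⁱ⁾(t)` exactly,
and what is left are the Lagrange remainders of the samples `j ≥ 1`.
-/

/-- The backward-difference approximation of the `i`-th derivative of `ξ` at `t`
with step size `τ`: `∇^i_τ ξ(t) = τ^{-i} · Σ_{j=0}^{i} (-1)^j (i choose j) ξ(t - jτ)`. -/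
noncomputable def bdApprox (ξ : ℝ → ℝ) (τ : ℝ) (i : ℕ) (t : ℝ) : ℝ :=
  τ ^ (-(i : ℤ)) *
    ∑ j ∈ Finset.range (i + 1), (-1 : ℝ) ^ j * (i.choose j : ℝ) * ξ (t - j * τ)

open Finset Set Filter Topology
open scoped Nat

theorem iteratedDerivWithin_congr_set {𝕜 F : Type*} [NontriviallyNormedField 𝕜]
    [NormedAddCommGroup F] [NormedSpace 𝕜 F] {f : 𝕜 → F} {s u : Set 𝕜} {x : 𝕜}
    (h : s =ᶠ[𝓝 x] u) (n : ℕ) :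
    iteratedDerivWithin n f s x = iteratedDerivWithin n f u x := by
  simp only [iteratedDerivWithin_eq_iteratedFDerivWithin, iteratedFDerivWithin_congr_set h]

theorem taylorWithinEval_congr_set {E : Type*} [NormedAddCommGroup E] [NormedSpace ℝ E]
    {f : ℝ → E} {s u : Set ℝ} {x₀ : ℝ} (h : s =ᶠ[𝓝 x₀] u) (n : ℕ) (x : ℝ) :
    taylorWithinEval f n s x₀ x = taylorWithinEval f n u x₀ x := by
  simp only [taylor_within_apply, iteratedDerivWithin_congr_set h]

theorem Icc_eventuallyEq_Icc_of_lt {α : Type*} [LinearOrder α] [TopologicalSpace α]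
    [OrderTopology α] {a a' b : α} (ha : a < b) (ha' : a' < b) :
    Icc a b =ᶠ[𝓝 b] Icc a' b := by
  filter_upwards [Ioi_mem_nhds (max_lt ha ha')] with y hy
  obtain ⟨ha_lt, ha'_lt⟩ := max_lt_iff.mp (mem_Ioi.mp hy)
  simp only [eq_iff_iff]
  constructor <;> rintro ⟨-, h⟩ <;> exact ⟨by order, h⟩

theorem taylor_mean_remainder_lagrange_Icc_right {f : ℝ → ℝ} {a b x : ℝ} {n : ℕ}
    (hax : a ≤ x) (hxb : x < b) (hf : ContDiffOn ℝ (n + 1) f (Icc a b)) :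
    ∃ r ∈ Ioo x b, f x = taylorWithinEval f n (Icc a b) b x
      + iteratedDerivWithin (n + 1) f (Icc a b) r * (x - b) ^ (n + 1) / (n + 1)! := by
  have hsub : uIcc b x = Icc x b := uIcc_of_ge hxb.le
  have hfx : ContDiffOn ℝ (n + 1) f (uIcc b x) := hsub ▸ hf.mono (Icc_subset_Icc_left hax)
  have hdiff : DifferentiableOn ℝ (iteratedDerivWithin n f (uIcc b x)) (uIoo b x) :=
    (hfx.differentiableOn_iteratedDerivWithin (by norm_cast; omega)
      (uniqueDiffOn_uIcc hxb.ne')).mono uIoo_subset_uIcc_self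
  obtain ⟨r, hr, hrem⟩ := taylor_mean_remainder_lagrange hxb.ne' hfx.of_succ hdiff
  rw [uIoo_of_ge hxb.le] at hr
  refine ⟨r, hr, ?_⟩
  -- Mathlib's Lagrange form lives on `uIcc b x`, which looks like `Icc a b` near `b` and near `r`.
  have hnear_b : uIcc b x =ᶠ[𝓝 b] Icc a b :=
    hsub ▸ Icc_eventuallyEq_Icc_of_lt hxb (hax.trans_lt hxb)
  have hnear_r : uIcc b x =ᶠ[𝓝 r] Icc a b := by
    rw [hsub]
    exact (eventuallyEq_univ.mpr (Icc_mem_nhds hr.1 hr.2)).trans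
      (eventuallyEq_univ.mpr (Icc_mem_nhds (hax.trans_lt hr.1) hr.2)).symm
  rw [taylorWithinEval_congr_set hnear_b, iteratedDerivWithin_congr_set hnear_r] at hrem
  linarith

theorem alternating_sum_range_choose_mul_sum_pow {R : Type*} [CommRing R] (n : ℕ) (c : ℕ → R) :
    ∑ j ∈ range (n + 1), (-1 : R) ^ j * n.choose j * ∑ k ∈ range (n + 1), c k * (j : R) ^ k
      = (-1) ^ n * n ! * c n := by
  set p : R → R := fun r ↦ ∑ k ∈ range (n + 1), c k * r ^ k
  have hΔ : (fwdDiff 1)^[n] p 0 = n ! * c n := by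
    have hp : p = (fun r ↦ ∑ k ∈ range n, c k * r ^ k) + c n • fun r ↦ r ^ n := by
      ext r; simp [p, sum_range_succ]
    rw [hp, fwdDiff_iter_add, fwdDiff_iter_sum_mul_pow_eq_zero, fwdDiff_iter_const_smul,
      fwdDiff_iter_eq_factorial]
    simp [mul_comm]
  rw [fwdDiff_iter_eq_sum_shift] at hΔ
  have hsign : ∀ j ∈ range (n + 1), (-1 : R) ^ n * (-1) ^ (n - j) = (-1) ^ j := fun j hj ↦ by
    rw [← Nat.sub_add_cancel (mem_range_succ_iff.mp hj), pow_add, Nat.add_sub_cancel,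
      mul_right_comm, ← mul_pow, neg_one_mul, neg_neg, one_pow, one_mul]
  rw [mul_assoc, ← hΔ, mul_sum]
  refine sum_congr rfl fun j hj ↦ ?_
  simp only [p, zero_add, nsmul_one, zsmul_eq_mul, Int.cast_mul, Int.cast_pow, Int.cast_neg,
    Int.cast_one, Int.cast_natCast, ← hsign j hj]
  ring

theorem alternating_sum_range_choose_mul_taylorWithinEval (f : ℝ → ℝ) (n : ℕ) (s : Set ℝ)
    (x₀ h : ℝ) :
    ∑ j ∈ range (n + 1), (-1 : ℝ) ^ j * n.choose j * taylorWithinEval f n s x₀ (x₀ - j * h)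
      = h ^ n * iteratedDerivWithin n f s x₀ := by
  have hpoly : ∀ j : ℕ, taylorWithinEval f n s x₀ (x₀ - j * h) = ∑ k ∈ range (n + 1),
      (k ! : ℝ)⁻¹ * (-h) ^ k * iteratedDerivWithin k f s x₀ * (j : ℝ) ^ k := fun j ↦ by
    rw [taylor_within_apply]
    refine sum_congr rfl fun k _ ↦ ?_
    rw [smul_eq_mul, sub_sub_cancel_left, neg_mul_eq_mul_neg, mul_pow]
    ring
  simp_rw [hpoly]
  rw [alternating_sum_range_choose_mul_sum_pow]
  calc (-1) ^ n * n ! * ((n ! : ℝ)⁻¹ * (-h) ^ n * iteratedDerivWithin n f s x₀)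
      = ((-1) ^ n * (-1) ^ n) * (n ! * (n ! : ℝ)⁻¹) * (h ^ n * iteratedDerivWithin n f s x₀) := by
        rw [neg_pow h]; ring
    _ = h ^ n * iteratedDerivWithin n f s x₀ := by
        rw [← mul_pow, neg_one_mul, neg_neg, one_pow, mul_inv_cancel₀ (by positivity), one_mul,
          one_mul]

theorem bdApprox_eq_add_sum_sub_taylorWithinEval {τ : ℝ} (hτ : τ ≠ 0) (ξ : ℝ → ℝ) (i : ℕ)
    (t : ℝ) (s : Set ℝ) :
    bdApprox ξ τ i t = iteratedDerivWithin i ξ s t + τ ^ (-(i : ℤ)) *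
      ∑ j ∈ range (i + 1), (-1 : ℝ) ^ j * i.choose j *
        (ξ (t - j * τ) - taylorWithinEval ξ i s t (t - j * τ)) := by
  simp only [bdApprox, mul_sub, sum_sub_distrib]
  rw [alternating_sum_range_choose_mul_taylorWithinEval, zpow_neg, zpow_natCast,
    inv_mul_cancel_left₀ (pow_ne_zero i hτ), add_sub_cancel]

theorem bdApprox_error_lagrange_form_general (i : ℕ) (τ : ℝ) (hτ : 0 < τ)
    (t : ℝ) (ξ : ℝ → ℝ)
    (hξ : ContDiffOn ℝ (i + 1) ξ (Set.Icc (t - i * τ) t)) :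
    ∃ r : ℕ → ℝ,
      (∀ j ∈ Finset.Icc 1 i, r j ∈ Set.Ioo (t - j * τ) t) ∧
      bdApprox ξ τ i t - iteratedDerivWithin i ξ (Set.Icc (t - i * τ) t) t
        = (τ / ((i + 1).factorial : ℝ)) *
            ∑ j ∈ Finset.Icc 1 i,
              (-1 : ℝ) ^ j * (i.choose j : ℝ) * (-(j : ℝ)) ^ (i + 1) *
                iteratedDerivWithin (i + 1) ξ (Set.Icc (t - i * τ) t) (r j) := by
  set s := Set.Icc (t - i * τ) t
  have hsample : ∀ j ∈ Finset.Icc 1 i, ∃ r ∈ Ioo (t - j * τ) t,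
      ξ (t - j * τ) - taylorWithinEval ξ i s t (t - j * τ)
        = iteratedDerivWithin (i + 1) ξ s r * (-(j : ℝ)) ^ (i + 1) * τ ^ (i + 1) / (i + 1)! := by
    intro j hj
    obtain ⟨hj_pos, hj_le⟩ := Finset.mem_Icc.mp hj
    obtain ⟨r, hr, htaylor⟩ := taylor_mean_remainder_lagrange_Icc_right (x := t - j * τ)
      (by gcongr) (by simp [hτ]; omega) hξ
    exact ⟨r, hr, by rw [htaylor]; ring⟩
  choose! r hr hremainder using hsample
  refine ⟨r, hr, ?_⟩
  have hterm_zero : ∀ j ∈ range (i + 1), j ∉ Finset.Icc 1 i →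
      (-1 : ℝ) ^ j * i.choose j * (ξ (t - j * τ) - taylorWithinEval ξ i s t (t - j * τ)) = 0 :=
    fun j hj hj' ↦ by
      obtain rfl : j = 0 := by simp_all
      simp [taylorWithinEval_self]
  rw [bdApprox_eq_add_sum_sub_taylorWithinEval hτ.ne' ξ i t s, add_sub_cancel_left,
    ← sum_subset (fun j hj ↦ by simp at hj ⊢; omega) hterm_zero, mul_sum, mul_sum]
  refine sum_congr rfl fun j hj ↦ ?_
  rw [hremainder j hj, zpow_neg, zpow_natCast]
  field_simp
  ring

theorem bdApprox_error_lagrange_form (i : ℕ) (hi : 1 ≤ i) (τ : ℝ) (hτ : 0 < τ)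
    (t : ℝ) (ξ : ℝ → ℝ)
    (hξ : ContDiffOn ℝ (i + 1) ξ (Set.Icc (t - i * τ) t)) :
    ∃ r : ℕ → ℝ,
      (∀ j ∈ Finset.Icc 1 i, r j ∈ Set.Ioo (t - j * τ) t) ∧
      bdApprox ξ τ i t - iteratedDerivWithin i ξ (Set.Icc (t - i * τ) t) t
        = (τ / ((i + 1).factorial : ℝ)) *
            ∑ j ∈ Finset.Icc 1 i,
              (-1 : ℝ) ^ j * (i.choose j : ℝ) * (-(j : ℝ)) ^ (i + 1) *
                iteratedDerivWithin (i + 1) ξ (Set.Icc (t - i * τ) t) (r j) :=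
  bdApprox_error_lagrange_form_general i τ hτ t ξ hξ
end

section
/- Let i ≥ 1, τ > 0, t ∈ ℝ, and let ξ : ℝ → ℝ be (i+1)-times continuously differentiable on [t − iτ, t]. If B ≥ 0 satisfies |ξ^{(i+1)}(s)| ≤ B for all s ∈ [t − iτ, t], then |∇^i_τ ξ(t) − ξ^{(i)}(t)| ≤ (τ · B / (i+1)!) · Σ_{j=1}^{i} (i choose j) · j^{i+1}. -/
section

open Set

theorem iteratedDerivWithin_eq_of_subset {𝕜 F : Type*} [NontriviallyNormedField 𝕜]
    [NormedAddCommGroup F] [NormedSpace 𝕜 F] {f : 𝕜 → F} {s t : Set 𝕜} {n : ℕ} {x : 𝕜}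
    (st : s ⊆ t) (hs : UniqueDiffOn 𝕜 s) (ht : UniqueDiffOn 𝕜 t) (hf : ContDiffOn 𝕜 n f t)
    (hx : x ∈ s) : iteratedDerivWithin n f s x = iteratedDerivWithin n f t x := by
  simp only [iteratedDerivWithin_eq_iteratedFDerivWithin,
    iteratedFDerivWithin_subset st hs ht hf hx]

theorem taylorWithinEval_eq_of_subset {E : Type*} [NormedAddCommGroup E] [NormedSpace ℝ E]
    {f : ℝ → E} {s t : Set ℝ} {n : ℕ} {x₀ : ℝ} (st : s ⊆ t) (hs : UniqueDiffOn ℝ s)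
    (ht : UniqueDiffOn ℝ t) (hf : ContDiffOn ℝ n f t) (hx₀ : x₀ ∈ s) (x : ℝ) :
    taylorWithinEval f n s x₀ x = taylorWithinEval f n t x₀ x := by
  simp only [taylor_within_apply]
  refine Finset.sum_congr rfl fun k hk ↦ ?_
  have hkn : (k : WithTop ℕ∞) ≤ n := mod_cast Finset.mem_range_succ_iff.1 hk
  rw [iteratedDerivWithin_eq_of_subset st hs ht (hf.of_le hkn) hx₀]

theorem abs_sub_taylorWithinEval_right_le {f : ℝ → ℝ} {a b C x : ℝ} {n : ℕ}
    (hf : ContDiffOn ℝ (n + 1) f (Icc a b))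
    (hC : ∀ y ∈ Icc a b, |iteratedDerivWithin (n + 1) f (Icc a b) y| ≤ C) (hx : x ∈ Icc a b) :
    |f x - taylorWithinEval f n (Icc a b) b x| ≤ C * (b - x) ^ (n + 1) / (n + 1).factorial := by
  rcases hx.2.eq_or_lt with rfl | hxb
  · simp [taylorWithinEval_self]
  have hsub : uIcc b x ⊆ Icc a b := by
    rw [uIcc_of_ge hxb.le]; exact Icc_subset_Icc_left hx.1
  have hu : UniqueDiffOn ℝ (Icc a b) := uniqueDiffOn_Icc (hx.1.trans_lt hxb)
  have hu' : UniqueDiffOn ℝ (uIcc b x) := uniqueDiffOn_uIcc hxb.ne'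
  obtain ⟨y, hy, hrem⟩ := taylor_mean_remainder_lagrange hxb.ne' (hf.mono hsub).of_succ
    (((hf.mono hsub).differentiableOn_iteratedDerivWithin (mod_cast n.lt_succ_self) hu').mono
      Ioo_subset_Icc_self)
  rw [taylorWithinEval_eq_of_subset hsub hu' hu hf.of_succ (by simp),
    iteratedDerivWithin_eq_of_subset hsub hu' hu hf (Ioo_subset_Icc_self hy)] at hrem
  rw [hrem, abs_div, abs_mul, abs_pow, abs_sub_comm, abs_of_nonneg (sub_nonneg.2 hxb.le),
    Nat.abs_cast]
  gcongr
  exact hC y (hsub (Ioo_subset_Icc_self hy))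

end

open Finset fwdDiff

theorem sum_range_neg_one_pow_mul_choose_mul_pow {R : Type*} [CommRing R] (n k : ℕ) :
    ∑ j ∈ range (n + 1), (-1 : R) ^ j * n.choose j * (j : R) ^ k
      = (-1) ^ n * (Δ_[1])^[n] (fun r : R ↦ r ^ k) 0 := by
  rw [fwdDiff_iter_eq_sum_shift, mul_sum]
  refine sum_congr rfl fun j hj ↦ ?_
  obtain ⟨m, rfl⟩ := Nat.exists_eq_add_of_le (mem_range_succ_iff.1 hj)
  have hsign : (-1 : R) ^ (j + m) * (-1) ^ m = (-1) ^ j := by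
    rw [pow_add, mul_assoc, ← pow_add, Even.neg_one_pow ⟨m, rfl⟩, mul_one]
  rw [← hsign, Nat.add_sub_cancel_left, zsmul_eq_mul, nsmul_eq_mul, zero_add, mul_one]
  push_cast
  ring

theorem sum_range_neg_one_pow_mul_choose_mul_pow_of_lt {R : Type*} [CommRing R] {n k : ℕ}
    (h : k < n) : ∑ j ∈ range (n + 1), (-1 : R) ^ j * n.choose j * (j : R) ^ k = 0 := by
  simp [sum_range_neg_one_pow_mul_choose_mul_pow, fwdDiff_iter_pow_eq_zero_of_lt h]

theorem sum_range_neg_one_pow_mul_choose_mul_pow_self {R : Type*} [CommRing R] (n : ℕ) :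
    ∑ j ∈ range (n + 1), (-1 : R) ^ j * n.choose j * (j : R) ^ n = (-1) ^ n * n.factorial := by
  simp [sum_range_neg_one_pow_mul_choose_mul_pow, fwdDiff_iter_eq_factorial]

theorem sum_range_neg_one_pow_mul_choose_mul_sum_pow {R : Type*} [CommRing R] (n : ℕ)
    (c : ℕ → R) :
    ∑ j ∈ range (n + 1), (-1 : R) ^ j * n.choose j * ∑ k ∈ range (n + 1), c k * (j : R) ^ k
      = (-1) ^ n * n.factorial * c n := by
  simp_rw [mul_sum]
  rw [sum_comm, sum_range_succ, sum_eq_zero fun k hk ↦ ?_, zero_add]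
  · simp_rw [← mul_assoc, mul_right_comm _ (c n), ← sum_mul,
      sum_range_neg_one_pow_mul_choose_mul_pow_self]
  · simp_rw [← mul_assoc, mul_right_comm _ (c k), ← sum_mul,
      sum_range_neg_one_pow_mul_choose_mul_pow_of_lt (mem_range.1 hk), zero_mul]

theorem bdApprox_sub (f g : ℝ → ℝ) (τ : ℝ) (i : ℕ) (t : ℝ) :
    bdApprox (f - g) τ i t = bdApprox f τ i t - bdApprox g τ i t := by
  simp only [bdApprox, Pi.sub_apply, mul_sub, sum_sub_distrib]

theorem bdApprox_taylorWithinEval (f : ℝ → ℝ) (s : Set ℝ) {τ : ℝ} (hτ : τ ≠ 0) (n : ℕ)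
    (x₀ : ℝ) :
    bdApprox (taylorWithinEval f n s x₀) τ n x₀ = iteratedDerivWithin n f s x₀ := by
  have hP : ∀ j : ℕ, taylorWithinEval f n s x₀ (x₀ - j * τ)
      = ∑ k ∈ range (n + 1),
          (-τ) ^ k / k.factorial * iteratedDerivWithin k f s x₀ * (j : ℝ) ^ k := by
    intro j
    rw [taylor_within_apply]
    refine sum_congr rfl fun k _ ↦ ?_
    rw [smul_eq_mul, sub_sub_cancel_left, ← mul_neg, mul_pow]
    ring
  simp only [bdApprox, hP, sum_range_neg_one_pow_mul_choose_mul_sum_pow, zpow_neg, zpow_natCast]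
  field_simp
  rw [← mul_pow, neg_one_mul, neg_neg]

theorem abs_bdApprox_le {f : ℝ → ℝ} {τ : ℝ} (hτ : 0 < τ) {i : ℕ} {t : ℝ} {M : ℕ → ℝ}
    (hM : ∀ j ≤ i, |f (t - j * τ)| ≤ M j) :
    |bdApprox f τ i t| ≤ (τ ^ i)⁻¹ * ∑ j ∈ range (i + 1), i.choose j * M j := by
  rw [bdApprox, zpow_neg, zpow_natCast, abs_mul, abs_of_pos (by positivity)]
  gcongr
  refine (abs_sum_le_sum_abs _ _).trans (sum_le_sum fun j hj ↦ ?_)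
  rw [abs_mul, abs_mul, abs_pow, abs_neg, abs_one, one_pow, one_mul, Nat.abs_cast]
  gcongr
  exact hM j (mem_range_succ_iff.1 hj)

theorem bdApprox_error_bound_general (i : ℕ) (τ : ℝ) (hτ : 0 < τ)
    (t : ℝ) (ξ : ℝ → ℝ)
    (hξ : ContDiffOn ℝ (i + 1) ξ (Set.Icc (t - i * τ) t))
    (B : ℝ)
    (hbound : ∀ s ∈ Set.Icc (t - i * τ) t,
      |iteratedDerivWithin (i + 1) ξ (Set.Icc (t - i * τ) t) s| ≤ B) :
    |bdApprox ξ τ i t - iteratedDerivWithin i ξ (Set.Icc (t - i * τ) t) t|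
      ≤ τ * B / ((i + 1).factorial : ℝ) *
          ∑ j ∈ Finset.Icc 1 i, (i.choose j : ℝ) * (j : ℝ) ^ (i + 1) := by
  set S := Set.Icc (t - i * τ) t
  have hremainder : ∀ j ≤ i, |(ξ - taylorWithinEval ξ i S t) (t - j * τ)|
      ≤ B * (j * τ) ^ (i + 1) / (i + 1).factorial := by
    intro j hj
    have hjτ : 0 ≤ (j : ℝ) * τ := by positivity
    have hmem : t - j * τ ∈ S := ⟨by gcongr, by linarith⟩
    simpa using abs_sub_taylorWithinEval_right_le hξ hbound hmem
  rw [← bdApprox_taylorWithinEval ξ S hτ.ne' i t, ← bdApprox_sub]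
  refine (abs_bdApprox_le hτ hremainder).trans_eq ?_
  rw [range_eq_Ico, sum_eq_sum_Ico_succ_bot (Nat.succ_pos i), zero_add, Nat.succ_eq_add_one,
    Ico_add_one_right_eq_Icc, Nat.cast_zero, zero_mul, zero_pow i.succ_ne_zero, mul_zero,
    zero_div, mul_zero, zero_add, mul_sum, mul_sum]
  refine sum_congr rfl fun j _ ↦ ?_
  field_simp
  ring

theorem bdApprox_error_bound (i : ℕ) (hi : 1 ≤ i) (τ : ℝ) (hτ : 0 < τ)
    (t : ℝ) (ξ : ℝ → ℝ)
    (hξ : ContDiffOn ℝ (i + 1) ξ (Set.Icc (t - i * τ) t))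
    (B : ℝ) (hB : 0 ≤ B)
    (hbound : ∀ s ∈ Set.Icc (t - i * τ) t,
      |iteratedDerivWithin (i + 1) ξ (Set.Icc (t - i * τ) t) s| ≤ B) :
    |bdApprox ξ τ i t - iteratedDerivWithin i ξ (Set.Icc (t - i * τ) t) t|
      ≤ τ * B / ((i + 1).factorial : ℝ) *
          ∑ j ∈ Finset.Icc 1 i, (i.choose j : ℝ) * (j : ℝ) ^ (i + 1) :=
  bdApprox_error_bound_general i τ hτ t ξ hξ B hbound
end
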